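/- Let D be a triangulated category (satisfying the octahedral axiom). If an object F of D admits a cone decomposition with components (A_1,…,A_k), and for some index i the object A_i admits a cone decomposition with components (B_1,…,B_l), then F admits a cone decomposition with components (A_1,…,A_{i−1},B_1,…,B_l,A_{i+1},…,A_k). -/

import Mathlib

open CategoryTheory CategoryTheory.Limits CategoryTheory.Pretriangulated Filter
open scoped ENNReal

universe v₁ v₂ u₁ u₂

variable {D : Type u₁} [Category.{v₁} D] [Preadditive D] [HasZeroObject D]
  [HasShift D ℤ] [∀ n : ℤ, (shiftFunctor D n).Additive] [Pretriangulated D]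

/-- An object `F` admits a cone decomposition with the given list of components. -/
inductive ConeDecomp : D → List D → Prop
  | nil {F : D} (h : IsZero F) : ConeDecomp F []
  | step {X : D} (F : D) {l : List D} (A : D) (hX : ConeDecomp X l)
      (f : X ⟶ F) (g : F ⟶ A) (h : A ⟶ X⟦(1 : ℤ)⟧)
      (ht : Triangle.mk f g h ∈ distTriang D) : ConeDecomp F (l ++ [A])

open scoped Classical in
/-- The categorical complexity `δ_t(E,F)`. -/
noncomputable def catDelta [HasBinaryBiproducts D] (t : ℝ) (E F : D) : ℝ≥0∞ :=
  if IsZero F then 0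
  else sInf {x : ℝ≥0∞ | ∃ (ns : List ℤ) (F' : D),
      ns ≠ [] ∧ ConeDecomp (F ⊞ F') (ns.map fun n => E⟦n⟧) ∧
      x = (ns.map fun n => ENNReal.ofReal (Real.exp ((n : ℝ) * t))).sum}

/-- Objects split-generated by `G`. -/
inductive SplitGen (G : D) : D → Prop
  | self : SplitGen G G
  | zero {X : D} (h : IsZero X) : SplitGen G X
  | ofIso {X Y : D} (e : X ≅ Y) (h : SplitGen G X) : SplitGen G Y
  | shift {X : D} (n : ℤ) (h : SplitGen G X) : SplitGen G (X⟦n⟧)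
  | cone₂ {X Y Z : D} (f : X ⟶ Y) (g : Y ⟶ Z) (h : Z ⟶ X⟦(1 : ℤ)⟧)
      (ht : Triangle.mk f g h ∈ distTriang D) (hX : SplitGen G X) (hZ : SplitGen G Z) :
      SplitGen G Y
  | summand {X Y : D} (s : X ⟶ Y) (p : Y ⟶ X) (hsp : s ≫ p = 𝟙 X)
      (h : SplitGen G Y) : SplitGen G X

/-- `G` is a split-generator. -/
def IsSplitGenerator (G : D) : Prop := ∀ X : D, SplitGen G X

/-!
Induct on the decomposition of `A`. If `X → F → A` and `Y → A → B` are distinguished, the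
octahedral axiom for the composite `F → A → B` with cocone `Z` gives a distinguished triangle
`X → Z → Y`; so `Z` decomposes as `l₁ ++ m'` by induction, and `Z → F → B` then decomposes `F`
as `l₁ ++ m' ++ [B]`. The components `l₂` after `A` are carried along unchanged.
-/

namespace ConeDecomp

lemma of_iso {X F : D} {l : List D} (hX : ConeDecomp X l) (e : X ≅ F) : ConeDecomp F l := by
  cases hX with
  | nil h => exact .nil (h.of_iso e.symm)
  | step _ A hY f g h ht =>
      refine .step _ A hY (f ≫ e.hom) (e.inv ≫ g) h (isomorphic_distinguished _ ht _ ?_)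
      refine Triangle.isoMk _ _ (Iso.refl _) e.symm (Iso.refl _) ?_ ?_ ?_ <;> simp [Triangle.mk]

lemma exists_distinguished_of_append_singleton {F C : D} {l : List D}
    (hF : ConeDecomp F (l ++ [C])) :
    ∃ (X : D) (f : X ⟶ F) (g : F ⟶ C) (h : C ⟶ X⟦(1 : ℤ)⟧),
      ConeDecomp X l ∧ Triangle.mk f g h ∈ distTriang D := by
  generalize hn : l ++ [C] = n at hF
  cases hF with
  | nil => simp at hn
  | step _ A hX f g h ht =>
      obtain ⟨rfl, hAC⟩ := List.append_inj' hn.symm rfl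
      obtain rfl : A = C := by simpa using hAC
      exact ⟨_, f, g, h, hX, ht⟩

lemma append_of_distinguished [IsTriangulated D] {X F A : D} {l m : List D}
    (hX : ConeDecomp X l) (hA : ConeDecomp A m)
    (f : X ⟶ F) (g : F ⟶ A) (h : A ⟶ X⟦(1 : ℤ)⟧) (ht : Triangle.mk f g h ∈ distTriang D) :
    ConeDecomp F (l ++ m) := by
  induction hA generalizing F with
  | nil hA =>
      have : IsIso f := (Triangle.isZero₃_iff_isIso₁ _ ht).1 hA
      simpa using hX.of_iso (asIso f)
  | @step Y A m' B _ _ p _ hYAB ih =>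
      obtain ⟨Z, v, w, hZFB⟩ := distinguished_cocone_triangle₁ (g ≫ p)
      have hXZY := (Triangulated.someOctahedron' rfl ht hYAB hZFB).mem
      simpa using ConeDecomp.step F B (ih _ _ _ hXZY) v (g ≫ p) w hZFB

end ConeDecomp

/-- A cone decomposition of a component can be inserted into a cone decomposition. -/
theorem ConeDecomp.insert [IsTriangulated D]
    {F A : D} {l₁ l₂ m : List D}
    (hF : ConeDecomp F (l₁ ++ A :: l₂)) (hA : ConeDecomp A m) :
    ConeDecomp F (l₁ ++ m ++ l₂) := by
  induction l₂ using List.reverseRecOn generalizing F with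
  | nil =>
      obtain ⟨X, f, g, h, hX, ht⟩ := hF.exists_distinguished_of_append_singleton
      simpa using hX.append_of_distinguished hA f g h ht
  | append_singleton l₂ C ih =>
      obtain ⟨X, f, g, h, hX, ht⟩ :=
        exists_distinguished_of_append_singleton (l := l₁ ++ A :: l₂) (by simpa using hF)
      simpa using ConeDecomp.step F C (ih hX) f g h ht
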